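/- If LOCAL(f, S) = ∅ for a labeling f : B → C with g(f) = c, then for every f' : B → C agreeing with f on S we have g(f') = c. -/

import Mathlib

/-!
Relabeling points outside `S` changes any vote count over `B` by at most `|B \ S|`, and
can only add to the count of `c` what it already has on `S`. So the count of a rival `c'`
under `f'` is at most its count on `S` plus `|B \ S|`, while the count of `c` under `f'`
is at least its count on `S`; emptiness of `LOCAL(f, S)` says exactly that the first
bound, with the tie-breaking bonus, stays below the second.
-/

/-- Number of elements of `B` labeled `c` by `f`. -/
def voteCount {β C : Type*} [DecidableEq C] (B : Finset β) (f : β → C) (c : C) : ℕ :=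
  (B.filter fun b => f b = c).card

/-- `c` is the argmax of vote counts over `B` with smaller-label tie-breaking. -/
def majWins {β C : Type*} [DecidableEq C] [LinearOrder C]
    (B : Finset β) (f : β → C) (c : C) : Prop :=
  ∀ c' ≠ c, voteCount B f c' + (if c' < c then 1 else 0) ≤ voteCount B f c

/-- The set of local-malicious labels (Definition 1 of the paper). -/
def localSet {β C : Type*} [DecidableEq β] [DecidableEq C] [LinearOrder C]
    (B S : Finset β) (f : β → C) (c₁ : C) : Set C :=
  {c | c ≠ c₁ ∧ voteCount S f c₁ <
    voteCount S f c + (B \ S).card + (if c < c₁ then 1 else 0)}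

section voteCount

variable {β C : Type*} [DecidableEq C]

theorem voteCount_congr {S : Finset β} {f f' : β → C} (h : ∀ b ∈ S, f' b = f b) (c : C) :
    voteCount S f' c = voteCount S f c := by
  unfold voteCount
  congr 1
  exact Finset.filter_congr fun b hb => by rw [h b hb]

theorem voteCount_mono {S B : Finset β} (hS : S ⊆ B) (f : β → C) (c : C) :
    voteCount S f c ≤ voteCount B f c :=
  Finset.card_le_card (Finset.filter_subset_filter _ hS)

theorem voteCount_le_add_card_sdiff [DecidableEq β] (B S : Finset β) (f : β → C) (c : C) :
    voteCount B f c ≤ voteCount S f c + (B \ S).card := by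
  unfold voteCount
  calc (B.filter fun b => f b = c).card
      ≤ ((S.filter fun b => f b = c) ∪ (B \ S)).card := by
        refine Finset.card_le_card fun b hb => ?_
        rw [Finset.mem_filter] at hb
        by_cases hbS : b ∈ S
        · exact Finset.mem_union_left _ (Finset.mem_filter.2 ⟨hbS, hb.2⟩)
        · exact Finset.mem_union_right _ (Finset.mem_sdiff.2 ⟨hb.1, hbS⟩)
    _ ≤ _ := Finset.card_union_le _ _

end voteCount

theorem le_of_localSet_eq_empty {β C : Type*} [DecidableEq β] [DecidableEq C] [LinearOrder C]
    {B S : Finset β} {f : β → C} {c : C} (hempty : localSet B S f c = ∅) {c' : C} (hc' : c' ≠ c) :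
    voteCount S f c' + (B \ S).card + (if c' < c then 1 else 0) ≤ voteCount S f c :=
  not_lt.1 fun h => (Set.eq_empty_iff_forall_notMem.1 hempty) c' ⟨hc', h⟩

theorem empty_local_implies_robust_general {β C : Type*} [DecidableEq β] [DecidableEq C]
    [LinearOrder C] (B S : Finset β) (hS : S ⊆ B) (f : β → C) (c : C)
    (hempty : localSet B S f c = ∅) :
    ∀ f' : β → C, (∀ b ∈ S, f' b = f b) → majWins B f' c := by
  intro f' hagree c' hc'
  calc voteCount B f' c' + (if c' < c then 1 else 0)
      ≤ voteCount S f' c' + (B \ S).card + (if c' < c then 1 else 0) :=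
        Nat.add_le_add_right (voteCount_le_add_card_sdiff B S f' c') _
    _ = voteCount S f c' + (B \ S).card + (if c' < c then 1 else 0) := by
        rw [voteCount_congr hagree]
    _ ≤ voteCount S f c := le_of_localSet_eq_empty hempty hc'
    _ = voteCount S f' c := (voteCount_congr hagree c).symm
    _ ≤ voteCount B f' c := voteCount_mono hS f' c

/-- If the set of local-malicious labels is empty, the prediction is robust to
arbitrary relabeling off `S`: every `f'` agreeing with `f` on `S` has the same
argmax label `c`. -/
theorem empty_local_implies_robust {β C : Type*} [DecidableEq β] [DecidableEq C]
    [LinearOrder C] (B S : Finset β) (hS : S ⊆ B) (f : β → C) (c : C)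
    (hg : majWins B f c) (hempty : localSet B S f c = ∅) :
    ∀ f' : β → C, (∀ b ∈ S, f' b = f b) → majWins B f' c :=
  empty_local_implies_robust_general B S hS f c hempty
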